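/- Let j : V → M be the ultrapower embedding of a normal measure W on P_α(α⁺) and ι : V → N the ultrapower embedding of its projection W↾α to a normal measure on α, with k : N → M the factor map defined by k([f]_{W↾α}) = j(f)(α). Then the critical point of k is (α⁺⁺)^N. -/

import Mathlib

/-!
Read on collapsed ordinals, the factor map `k` is strictly increasing. It is the identity below
`(α⁺⁺)^N` because it is onto there: if `G x < (x ∩ α)⁺⁺` for `W`-almost all `x`, then `G`
factors through `x ↦ x ∩ α` modulo `W`. To see this, first push the bound down to `(x ∩ α)⁺` by
injections depending only on `x ∩ α`; then an injection of `G x < (x ∩ α)⁺` into `x ∩ α` codes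
`G x` by a relation on `x ∩ α`, and normality makes that relation the trace of a single relation
on `α`, from which `G x` is decoded knowing `x ∩ α` alone.

On the other hand `k` moves `(α⁺⁺)^N`. Under GCH there are only `(α⁺)^α = α⁺` functions
`α → α⁺`, so `(α⁺⁺)^N < α⁺⁺`. But almost every `x` has size at most `(x ∩ α)⁺`, so the functions
`x ↦ otp {ξ < β | e_β ξ ∈ x}` (`β < α⁺⁺`, `e_β : β ↪ α⁺`) form a `W`-increasing chain of length
`α⁺⁺` below `[x ↦ (x ∩ α)⁺⁺]_W = k((α⁺⁺)^N)`.
-/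

noncomputable section

open Filter

/-- `P_α(α⁺)`: subsets of (the ordinals below) `lam` of cardinality `< κ`. -/
def PkL (κ : Cardinal.{0}) (lam : Ordinal.{0}) : Type 1 :=
  {x : Set Ordinal // x ⊆ Set.Iio lam ∧ Cardinal.mk x < Cardinal.lift.{1} κ}

def UFComplete {α : Type*} (κ : Cardinal.{0}) (U : Ultrafilter α) : Prop :=
  ∀ (ι : Type) (f : ι → Set α), Cardinal.mk ι < κ → (∀ i, f i ∈ U) → (⋂ i, f i) ∈ U

def IsFine (κ : Cardinal.{0}) (lam : Ordinal.{0}) (U : Ultrafilter (PkL κ lam)) : Prop :=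
  ∀ β < lam, {x : PkL κ lam | β ∈ x.val} ∈ U

def IsNormalM (κ : Cardinal.{0}) (lam : Ordinal.{0}) (U : Ultrafilter (PkL κ lam)) : Prop :=
  ∀ A : Ordinal → Set (PkL κ lam), (∀ β < lam, A β ∈ U) →
    {x : PkL κ lam | ∀ β ∈ x.val, x ∈ A β} ∈ U

/-- The ordinal `x ∩ α`. -/
def ordOf (κ : Cardinal.{0}) {lam : Ordinal.{0}} (x : PkL κ lam) : Ordinal :=
  sInf {β | x.val ∩ Set.Iio κ.ord ⊆ Set.Iio β}

/-- The projected measure `W↾α` on the ordinals (concentrating on `α`). -/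
def UK (a : Cardinal.{0}) (W : Ultrafilter (PkL a (Order.succ a).ord)) :
    Ultrafilter Ordinal.{0} :=
  W.map (ordOf a)

theorem tendsto_ordOf (a : Cardinal.{0}) (W : Ultrafilter (PkL a (Order.succ a).ord)) :
    Filter.Tendsto (ordOf a) (W : Filter (PkL a (Order.succ a).ord)) (UK a W : Filter Ordinal) := by
  rw [UK, Ultrafilter.coe_map]; exact Filter.tendsto_map

/-- The factor map `k : N → M`, `k([f]_{W↾α}) = j_W(f)(α) = [f ∘ (x ↦ x ∩ α)]_W`,
acting on the ordinals of the two ultrapowers (represented as germs, i.e. by their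
Łoś representatives). -/
def kfac (a : Cardinal.{0}) (W : Ultrafilter (PkL a (Order.succ a).ord))
    (n : Filter.Germ (UK a W : Filter Ordinal) Ordinal) :
    Filter.Germ (W : Filter (PkL a (Order.succ a).ord)) Ordinal :=
  n.compTendsto (ordOf a) (tendsto_ordOf a W)


open Cardinal Set Ordinal

universe u v

namespace FactorMap

/-- Junk value `0` unless `r ≃r Iio o` for some `o : Ordinal.{0}`. -/
def smallType {α : Type 1} (r : α → α → Prop) : Ordinal.{0} :=
  sInf {o | Nonempty (r ≃r ((· < ·) : Iio o → Iio o → Prop))}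

theorem smallType_eq_of_relIso {α : Type 1} {r : α → α → Prop} {o : Ordinal.{0}}
    (f : r ≃r ((· < ·) : Iio o → Iio o → Prop)) : smallType r = o := by
  obtain ⟨g⟩ := csInf_mem
    (⟨o, ⟨f⟩⟩ : {o | Nonempty (r ≃r ((· < ·) : Iio o → Iio o → Prop))}.Nonempty)
  have := Ordinal.type_eq.2 ⟨f.symm.trans g⟩
  rw [type_lt_Iio, type_lt_Iio] at this
  exact (lift_inj.1 this).symm

theorem lift_smallType {α : Type 1} (r : α → α → Prop) [IsWellOrder α r] {o : Ordinal.{0}}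
    (h : type r ≤ lift.{1} o) : lift.{1} (smallType r) = type r := by
  obtain ⟨o', ho'⟩ := mem_range_lift_of_le h
  obtain ⟨f⟩ := Ordinal.type_eq.1 (show type r = typeLT (Iio o') by rw [type_lt_Iio, ho'])
  rw [smallType_eq_of_relIso f, ho']

def orderType (s : Set Ordinal.{0}) : Ordinal.{0} :=
  smallType ((· < ·) : s → s → Prop)

theorem typeLT_mono {s t : Set Ordinal.{0}} (hst : s ⊆ t) : typeLT s ≤ typeLT t :=
  RelEmbedding.ordinal_type_le ⟨⟨inclusion hst, inclusion_injective hst⟩, Iff.rfl⟩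

theorem lift_orderType {s : Set Ordinal.{0}} {o : Ordinal.{0}} (hs : s ⊆ Iio o) :
    lift.{1} (orderType s) = typeLT s :=
  lift_smallType _ ((typeLT_mono hs).trans (type_lt_Iio o).le)

theorem lift_card_orderType {s : Set Ordinal.{0}} {o : Ordinal.{0}} (hs : s ⊆ Iio o) :
    Cardinal.lift.{1} (orderType s).card = #s := by
  rw [Ordinal.lift_card, lift_orderType hs, card_type]

theorem orderType_lt_orderType {s t : Set Ordinal.{0}} {θ o : Ordinal.{0}} (hst : s ⊆ t)
    (hθ : θ ∈ t) (hsθ : s ⊆ Iio θ) (ht : t ⊆ Iio o) : orderType s < orderType t := by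
  rw [← Ordinal.lift_lt.{1}, lift_orderType (hst.trans ht), lift_orderType ht]
  refine lt_of_le_of_lt ?_ (typein_lt_type _ (⟨θ, hθ⟩ : t))
  exact RelEmbedding.ordinal_type_le
    ⟨⟨fun ξ => ⟨⟨ξ, hst ξ.2⟩, hsθ ξ.2⟩, fun _ _ h => Subtype.ext (congrArg (·.1.1) h)⟩, Iff.rfl⟩

theorem exists_injOn_mapsTo_Iio {δ b : Ordinal.{0}} (h : δ.card ≤ b.card) :
    ∃ e : Ordinal → Ordinal, InjOn e (Iio δ) ∧ MapsTo e (Iio δ) (Iio b) := by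
  classical
  obtain ⟨emb⟩ : Nonempty (Iio δ ↪ Iio b) := by
    rw [← Cardinal.le_def, Cardinal.mk_Iio_ordinal, Cardinal.mk_Iio_ordinal]
    exact Cardinal.lift_le.2 h
  refine ⟨fun ξ => if hξ : ξ < δ then emb ⟨ξ, hξ⟩ else 0, fun ξ hξ ξ' hξ' heq => ?_,
    fun ξ hξ => ?_⟩
  · simp only [dif_pos (show ξ < δ from hξ), dif_pos (show ξ' < δ from hξ')] at heq
    exact congrArg Subtype.val (emb.injective (Subtype.ext heq))
  · simp [dif_pos (show ξ < δ from hξ)]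

theorem exists_forall_injOn_mapsTo_Iio :
    ∃ e : Ordinal.{0} → Ordinal.{0} → Ordinal.{0} → Ordinal.{0}, ∀ δ b,
      δ.card ≤ b.card → InjOn (e δ b) (Iio δ) ∧ MapsTo (e δ b) (Iio δ) (Iio b) := by
  classical
  exact ⟨fun δ b => if h : δ.card ≤ b.card then (exists_injOn_mapsTo_Iio h).choose else id,
    fun δ b h => by simpa only [dif_pos h] using (exists_injOn_mapsTo_Iio h).choose_spec⟩

theorem card_le_card_ord_of_lt_ord_succ {δ : Ordinal.{0}} {c : Cardinal.{0}}
    (h : δ < (Order.succ c).ord) : δ.card ≤ c.ord.card :=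
  (card_ord c).symm ▸ Order.lt_succ_iff.1 (lt_ord.1 h)

/-- `R` is read as the non-strict form of a well-order of its field `{w | R w w}`. -/
def codedType (R : Ordinal.{0} → Ordinal.{0} → Prop) (ζ : Ordinal.{0}) : Ordinal.{0} :=
  smallType fun u v : {w // w < ζ ∧ R w w} => u.1 ≠ v.1 ∧ R u.1 v.1

theorem codedType_eq {R : Ordinal.{0} → Ordinal.{0} → Prop} {ζ γ : Ordinal.{0}}
    {e : Ordinal → Ordinal} (hinj : InjOn e (Iio γ)) (hmaps : MapsTo e (Iio γ) (Iio ζ))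
    (hR : ∀ ξ < ζ, ∀ η < ζ, R ξ η ↔ ∃ u v, u ≤ v ∧ v < γ ∧ e u = ξ ∧ e v = η) :
    codedType R ζ = γ := by
  have hRe : ∀ u < γ, ∀ v < γ, R (e u) (e v) ↔ u ≤ v := by
    intro u hu v hv
    rw [hR _ (hmaps hu) _ (hmaps hv)]
    constructor
    · rintro ⟨u', v', huv', hv', hu', hv''⟩
      rwa [← hinj (huv'.trans_lt hv') hu hu', ← hinj hv' hv hv'']
    · exact fun huv => ⟨u, v, huv, hv, rfl, rfl⟩
  let φ (u : Iio γ) : {w // w < ζ ∧ R w w} := ⟨e u, hmaps u.2, (hRe u u.2 u u.2).2 le_rfl⟩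
  have hφ : Function.Bijective φ := by
    refine ⟨fun u v h => Subtype.ext (hinj u.2 v.2 (congrArg Subtype.val h)), ?_⟩
    rintro ⟨w, hwζ, hw⟩
    obtain ⟨u, v, huv, hv, rfl, -⟩ := (hR w hwζ w hwζ).1 hw
    exact ⟨⟨u, huv.trans_lt hv⟩, rfl⟩
  refine smallType_eq_of_relIso (RelIso.symm ⟨Equiv.ofBijective φ hφ, fun {u v} => ?_⟩)
  change e u ≠ e v ∧ R (e u) (e v) ↔ u < v
  rw [hinj.ne_iff u.2 v.2, hRe u u.2 v v.2, lt_iff_le_and_ne, and_comm, Subtype.coe_ne_coe,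
    Subtype.coe_le_coe]

theorem mk_le_succ_of_forall_mk_Iio_le {α : Type*} [LinearOrder α] [WellFoundedLT α]
    {κ : Cardinal} (h : ∀ b : α, #(Iio b) ≤ κ) : #α ≤ Order.succ κ := by
  by_contra! hκ
  have hlt : (Order.succ κ).ord < typeLT α :=
    (ord_lt_ord.2 (hκ.trans_eq (card_type _).symm)).trans_le (ord_card_le _)
  obtain ⟨b, hb⟩ := typein_surj _ hlt
  have hcard : #(Iio b) = (typein (α := α) (· < ·) b).card := by rw [card_typein]; rfl
  exact (Order.lt_succ κ).not_ge (by simpa only [hcard, hb, card_ord] using h b)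

theorem eq_self_of_Iio_subset_range {α : Type*} [LinearOrder α] [WellFoundedLT α] {h : α → α}
    (hh : StrictMono h) {γ : α} (hrange : ∀ β < γ, Iio (h β) ⊆ range h) :
    ∀ β < γ, h β = β := by
  intro β
  induction β using WellFoundedLT.induction with
  | _ β IH =>
  intro hβ
  refine (hh.le_apply.lt_or_eq.resolve_left fun hlt => ?_).symm
  obtain ⟨β', hβ'⟩ := hrange β hβ hlt
  have hβ'β : β' < β := hh.lt_iff_lt.1 (hβ' ▸ hlt)
  exact hβ'β.ne (hβ' ▸ IH β' hβ'β (hβ'β.trans hβ)).symm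

theorem lift_le_of_strictMonoOn {o : Ordinal.{u}} {c : Ordinal.{v}} {ψ : Ordinal.{u} → Ordinal.{v}}
    (hψ : StrictMonoOn ψ (Iio o)) (hc : ∀ β < o, ψ β < c) : lift.{v} o ≤ lift.{u} c := by
  let f := OrderEmbedding.ofStrictMono (fun β : Iio o => (⟨ψ β, hc β β.2⟩ : Iio c))
    (fun β β' h => hψ β.2 β'.2 h)
  have := Ordinal.lift_type_le.{u + 1, v + 1, max u v}.2 ⟨f.ltEmbedding.collapse⟩
  rw [← Ordinal.lift_le.{max (u + 1) (v + 1)}]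
  simpa only [type_lt_Iio, Ordinal.lift_lift] using this

theorem _root_.UFComplete.eventually_forall_lt {α : Type*} {κ : Cardinal.{0}} {U : Ultrafilter α}
    (hU : UFComplete κ U) {β : Ordinal.{0}} (hβ : β.card < κ) {p : Ordinal → α → Prop}
    (hp : ∀ δ < β, ∀ᶠ x in (U : Filter α), p δ x) : ∀ᶠ x in (U : Filter α), ∀ δ < β, p δ x := by
  have := hU β.ToType (fun i => {x | p (ToType.mk.symm i) x}) (by rwa [mk_toType])
    (fun i => hp _ (ToType.mk.symm i).2)
  filter_upwards [this] with x hx δ hδ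
  simpa using mem_iInter.1 hx (ToType.mk ⟨δ, hδ⟩)

theorem _root_.Ultrafilter.eventually_eventually_iff {α : Type*} (U : Ultrafilter α)
    (p : α → Prop) :
    ∀ᶠ x in (U : Filter α), (∀ᶠ y in (U : Filter α), p y) ↔ p x := by
  by_cases h : ∀ᶠ y in (U : Filter α), p y
  · filter_upwards [h] with x hx
    simp [h, hx]
  · filter_upwards [Ultrafilter.eventually_not.2 h] with x hx
    simp [h, hx]

theorem mk_Iio_coe_germ_le {l : Ultrafilter Ordinal.{0}} {o b : Ordinal.{0}} (ho : Iio o ∈ l)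
    (hb : 0 < b) {f : Ordinal → Ordinal} (hf : ∀ ζ < o, f ζ ≤ b) :
    #(Iio (f : Germ (l : Filter Ordinal) Ordinal)) ≤ Cardinal.lift.{1} (b.card ^ o.card) := by
  classical
  choose rep hrep using fun n : Germ (l : Filter Ordinal) Ordinal =>
    n.inductionOn (p := fun n => ∃ u : Ordinal → Ordinal, (u : Germ _ _) = n) fun u => ⟨u, rfl⟩
  have hlt (n : Iio (f : Germ (l : Filter Ordinal) Ordinal)) :
      ∀ᶠ ζ in (l : Filter Ordinal), rep n ζ < f ζ :=
    Germ.coe_lt.1 ((hrep n).symm ▸ n.2)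
  let J (n : Iio (f : Germ (l : Filter Ordinal) Ordinal)) (ζ : Iio o) : Iio b :=
    if h : rep n ζ < b then ⟨rep n ζ, h⟩ else ⟨0, hb⟩
  have hJ : Function.Injective J := by
    intro n n' hnn'
    refine Subtype.ext ((hrep n).symm.trans (Eq.trans (Germ.coe_eq.2 ?_) (hrep n')))
    filter_upwards [ho, hlt n, hlt n'] with ζ hζ h h'
    have := congrArg Subtype.val (congrFun hnn' ⟨ζ, hζ⟩)
    simpa [J, h.trans_le (hf ζ hζ), h'.trans_le (hf ζ hζ)] using this
  calc _ ≤ #(Iio o → Iio b) := mk_le_of_injective hJ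
    _ = _ := by rw [← power_def, Cardinal.mk_Iio_ordinal, Cardinal.mk_Iio_ordinal, lift_power]

theorem succ_power_self_of_two_power {c : Cardinal} (hc : ℵ₀ ≤ c) (h : 2 ^ c = Order.succ c) :
    Order.succ c ^ c = Order.succ c := by
  have two_le : (2 : Cardinal) ≤ Order.succ c :=
    (natCast_lt_aleph0 (n := 2)).le.trans (hc.trans (Order.le_succ c))
  refine le_antisymm (le_of_eq ?_) ?_
  · calc Order.succ c ^ c = (2 ^ c) ^ c := by rw [h]
      _ = 2 ^ c := by rw [← power_mul, mul_eq_self hc]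
      _ = Order.succ c := h
  · calc Order.succ c = 2 ^ c := h.symm
      _ ≤ Order.succ c ^ c := power_le_power_right two_le

section NormalMeasure

variable {κ : Cardinal.{0}} {lam : Ordinal.{0}} {W : Ultrafilter (PkL κ lam)}

theorem inter_Iio_subset_Iio_ordOf (x : PkL κ lam) : x.val ∩ Iio κ.ord ⊆ Iio (ordOf κ x) :=
  csInf_mem (⟨κ.ord, fun _ hη => hη.2⟩ : {β | x.val ∩ Iio κ.ord ⊆ Iio β}.Nonempty)

theorem exists_mem_le_of_lt_ordOf {x : PkL κ lam} {δ : Ordinal} (h : δ < ordOf κ x) :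
    ∃ η ∈ x.val, η < κ.ord ∧ δ ≤ η := by
  have hδ : ¬ x.val ∩ Iio κ.ord ⊆ Iio δ := notMem_of_lt_csInf h (OrderBot.bddBelow _)
  obtain ⟨η, ⟨hηx, hηκ⟩, hδη⟩ := not_subset.1 hδ
  exact ⟨η, hηx, hηκ, not_lt.1 hδη⟩

theorem ordOf_lt_ord (hκ : κ.IsRegular) (x : PkL κ lam) : ordOf κ x < κ.ord := by
  have hcard : Cardinal.lift.{0} #↥(x.val ∩ Iio κ.ord) < (Ordinal.lift.{1} κ.ord).cof := by
    rw [Cardinal.lift_id'.{0, 1}, ← lift_cof, hκ.cof_ord]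
    exact (mk_le_mk_of_subset inter_subset_left).trans_lt x.2.2
  refine (csInf_le (OrderBot.bddBelow _) fun η hη => ?_).trans_lt
    (lift_iSup_add_one_lt_of_lt_cof hcard fun η : ↥(x.val ∩ Iio κ.ord) => η.2.2)
  have hbdd : BddAbove (range fun η : ↥(x.val ∩ Iio κ.ord) => (η : Ordinal) + 1) :=
    ⟨κ.ord, forall_mem_range.2 fun η => Order.add_one_le_of_lt η.2.2⟩
  exact (lt_add_one η).trans_le (le_ciSup hbdd ⟨η, hη⟩)

theorem eventually_forall_lt_ordOf (hκ : κ.IsRegular) (hcomp : UFComplete κ W)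
    (hnorm : IsNormalM κ lam W) {p : Ordinal → PkL κ lam → Prop}
    (hp : ∀ δ < κ.ord, ∀ᶠ x in (W : Filter (PkL κ lam)), p δ x) :
    ∀ᶠ x in (W : Filter (PkL κ lam)), ∀ δ < ordOf κ x, p δ x := by
  have hA : ∀ η < lam, {x | η < κ.ord → ∀ δ < η + 1, p δ x} ∈ W := by
    intro η _
    by_cases hη : η < κ.ord
    · have hη1 : η + 1 < κ.ord := (isSuccLimit_ord hκ.aleph0_le).add_one_lt hη
      filter_upwards [hcomp.eventually_forall_lt (lt_ord.1 hη1)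
        fun δ hδ => hp δ (hδ.trans hη1)] with x hx _ using hx
    · exact Filter.Eventually.of_forall fun x h => absurd h hη
  filter_upwards [hnorm _ hA] with x hx δ hδ
  obtain ⟨η, hηx, hηκ, hδη⟩ := exists_mem_le_of_lt_ordOf hδ
  exact hx η hηx hηκ δ (Order.lt_add_one_iff.2 hδη)

theorem eventually_forall_lt_ordOf_iff_eventually (hκ : κ.IsRegular) (hcomp : UFComplete κ W)
    (hnorm : IsNormalM κ lam W) (R : PkL κ lam → Ordinal → Ordinal → Prop) :
    ∀ᶠ x in (W : Filter (PkL κ lam)), ∀ ξ < ordOf κ x, ∀ η < ordOf κ x,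
      ((∀ᶠ y in (W : Filter (PkL κ lam)), R y ξ η) ↔ R x ξ η) :=
  eventually_forall_lt_ordOf hκ hcomp hnorm fun ξ _ =>
    eventually_forall_lt_ordOf hκ hcomp hnorm fun η _ =>
      W.eventually_eventually_iff fun y => R y ξ η

theorem eventually_mapsTo (hfine : IsFine κ lam W) (hnorm : IsNormalM κ lam W)
    {t : Ordinal → Ordinal} {s : Set Ordinal} (ht : MapsTo t s (Iio lam)) :
    ∀ᶠ x in (W : Filter (PkL κ lam)), MapsTo t (x.val ∩ s) x.val := by
  have hA : ∀ η < lam, {x : PkL κ lam | η ∈ s → t η ∈ x.val} ∈ W := by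
    intro η _
    by_cases hη : η ∈ s
    · filter_upwards [hfine _ (ht hη)] with x hx _ using hx
    · exact Filter.Eventually.of_forall fun x h => absurd h hη
  filter_upwards [hnorm _ hA] with x hx η hη using hx η hη.1 hη.2

theorem exists_comp_ordOf_eq_of_lt_succ (hκ : κ.IsRegular) (hcomp : UFComplete κ W)
    (hnorm : IsNormalM κ lam W) {G : PkL κ lam → Ordinal}
    (hG : ∀ᶠ x in (W : Filter (PkL κ lam)), G x < (Order.succ (ordOf κ x).card).ord) :
    ∃ F : Ordinal → Ordinal, ∀ᶠ x in (W : Filter (PkL κ lam)), F (ordOf κ x) = G x := by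
  obtain ⟨e, he⟩ := exists_forall_injOn_mapsTo_Iio
  let R (x : PkL κ lam) (ξ η : Ordinal) : Prop :=
    ∃ u v, u ≤ v ∧ v < G x ∧ e (G x) (ordOf κ x) u = ξ ∧ e (G x) (ordOf κ x) v = η
  refine ⟨codedType fun ξ η => ∀ᶠ y in (W : Filter (PkL κ lam)), R y ξ η, ?_⟩
  filter_upwards [hG, eventually_forall_lt_ordOf_iff_eventually hκ hcomp hnorm R] with x hx hR
  have hcard : (G x).card ≤ (ordOf κ x).card := Order.lt_succ_iff.1 (lt_ord.1 hx)
  exact codedType_eq (he _ _ hcard).1 (he _ _ hcard).2 hR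

theorem exists_comp_ordOf_eq (hκ : κ.IsRegular) (hcomp : UFComplete κ W)
    (hnorm : IsNormalM κ lam W) {f : Ordinal → Ordinal} {G : PkL κ lam → Ordinal}
    (hG : ∀ᶠ x in (W : Filter (PkL κ lam)),
      G x < f (ordOf κ x) ∧ f (ordOf κ x) < (Order.succ (Order.succ (ordOf κ x).card)).ord) :
    ∃ F : Ordinal → Ordinal, ∀ᶠ x in (W : Filter (PkL κ lam)), F (ordOf κ x) = G x := by
  obtain ⟨e, he⟩ := exists_forall_injOn_mapsTo_Iio
  let i (ζ : Ordinal) := e (f ζ) (Order.succ ζ.card).ord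
  have hi (ζ : Ordinal) (h : f ζ < (Order.succ (Order.succ ζ.card)).ord) :
      InjOn (i ζ) (Iio (f ζ)) ∧ MapsTo (i ζ) (Iio (f ζ)) (Iio (Order.succ ζ.card).ord) :=
    he _ _ (card_le_card_ord_of_lt_ord_succ h)
  obtain ⟨F', hF'⟩ := exists_comp_ordOf_eq_of_lt_succ hκ hcomp hnorm
    (G := fun x => i (ordOf κ x) (G x))
    (by filter_upwards [hG] with x hx using (hi _ hx.2).2 hx.1)
  refine ⟨fun ζ => Function.invFunOn (i ζ) (Iio (f ζ)) (F' ζ), ?_⟩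
  filter_upwards [hG, hF'] with x hx hx'
  rw [hx']
  exact (hi _ hx.2).1.leftInvOn_invFunOn hx.1

theorem eventually_orderType_lt_orderType (hfine : IsFine κ lam W) (hnorm : IsNormalM κ lam W)
    {β β' : Ordinal} {e e' : Ordinal → Ordinal} (he : InjOn e (Iio β))
    (he' : MapsTo e' (Iio β') (Iio lam)) (hββ' : β < β') :
    ∀ᶠ x in (W : Filter (PkL κ lam)),
      orderType {ξ | ξ < β ∧ e ξ ∈ x.val} < orderType {ξ | ξ < β' ∧ e' ξ ∈ x.val} := by
  have ht : MapsTo (e' ∘ Function.invFunOn e (Iio β)) (e '' Iio β) (Iio lam) := by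
    rintro _ ⟨ξ, hξ, rfl⟩
    exact he' ((Function.invFunOn_mem ⟨ξ, hξ, rfl⟩).trans hββ')
  filter_upwards [eventually_mapsTo hfine hnorm ht, hfine _ (he' hββ')] with x hx hβx
  refine orderType_lt_orderType (o := β') ?_ ⟨hββ', hβx⟩ (fun ξ hξ => hξ.1) (fun ξ hξ => hξ.1)
  rintro ξ ⟨hξ, hξx⟩
  have := hx ⟨hξx, mem_image_of_mem e hξ⟩
  rw [Function.comp_apply, he.leftInvOn_invFunOn hξ] at this
  exact ⟨hξ.trans hββ', this⟩

end NormalMeasure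

section SuccessorMeasure

variable {κ : Cardinal.{0}} {W : Ultrafilter (PkL κ (Order.succ κ).ord)}

theorem eventually_mk_le_succ_card_ordOf (hfine : IsFine κ (Order.succ κ).ord W)
    (hnorm : IsNormalM κ (Order.succ κ).ord W) :
    ∀ᶠ x in (W : Filter (PkL κ (Order.succ κ).ord)),
      #x.val ≤ Cardinal.lift.{1} (Order.succ (ordOf κ x).card) := by
  obtain ⟨e, he⟩ := exists_forall_injOn_mapsTo_Iio
  have he' (δ : Ordinal) (hδ : δ < (Order.succ κ).ord) :
      InjOn (e δ κ.ord) (Iio δ) ∧ MapsTo (e δ κ.ord) (Iio δ) (Iio κ.ord) :=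
    he _ _ (card_le_card_ord_of_lt_ord_succ hδ)
  have hκlam : κ.ord ≤ (Order.succ κ).ord := ord_le_ord.2 (Order.le_succ κ)
  have hclosed : ∀ᶠ x in (W : Filter (PkL κ (Order.succ κ).ord)),
      ∀ δ ∈ x.val, MapsTo (e δ κ.ord) (x.val ∩ Iio δ) x.val :=
    hnorm _ fun δ hδ =>
      eventually_mapsTo hfine hnorm ((he' δ hδ).2.mono_right (Iio_subset_Iio hκlam))
  filter_upwards [hclosed] with x hx
  rw [Cardinal.lift_succ]
  refine mk_le_succ_of_forall_mk_Iio_le fun b => ?_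
  have hb := he' b (x.2.1 b.2)
  calc #(Iio b) ≤ #(Iio (ordOf κ x)) :=
        mk_le_of_injective (f := fun b' : Iio b => (⟨e b κ.ord b'.1.1,
          inter_Iio_subset_Iio_ordOf x ⟨hx b b.2 ⟨b'.1.2, b'.2⟩, hb.2 b'.2⟩⟩ : Iio (ordOf κ x)))
          fun b' b'' h => Subtype.ext (Subtype.ext (hb.1 b'.2 b''.2 (congrArg Subtype.val h)))
    _ = _ := Cardinal.mk_Iio_ordinal _

theorem eventually_orderType_lt (hfine : IsFine κ (Order.succ κ).ord W)
    (hnorm : IsNormalM κ (Order.succ κ).ord W) {β : Ordinal} {e : Ordinal → Ordinal}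
    (he : InjOn e (Iio β)) :
    ∀ᶠ x in (W : Filter (PkL κ (Order.succ κ).ord)),
      orderType {ξ | ξ < β ∧ e ξ ∈ x.val} < (Order.succ (Order.succ (ordOf κ x).card)).ord := by
  filter_upwards [eventually_mk_le_succ_card_ordOf hfine hnorm] with x hx
  have hs : {ξ | ξ < β ∧ e ξ ∈ x.val} ⊆ Iio β := fun ξ hξ => hξ.1
  have hmk : #{ξ | ξ < β ∧ e ξ ∈ x.val} ≤ #x.val :=
    mk_le_of_injective (f := fun ξ => (⟨e ξ, ξ.2.2⟩ : x.val))
      fun ξ ξ' h => Subtype.ext (he ξ.2.1 ξ'.2.1 (congrArg Subtype.val h))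
  rw [lt_ord, Order.lt_succ_iff, ← Cardinal.lift_le.{1}, lift_card_orderType hs]
  exact hmk.trans hx

theorem exists_eventually_increasing_family (hfine : IsFine κ (Order.succ κ).ord W)
    (hnorm : IsNormalM κ (Order.succ κ).ord W) :
    ∃ g : Ordinal → PkL κ (Order.succ κ).ord → Ordinal,
      (∀ β < (Order.succ (Order.succ κ)).ord, ∀ᶠ x in (W : Filter (PkL κ (Order.succ κ).ord)),
        g β x < (Order.succ (Order.succ (ordOf κ x).card)).ord) ∧
      ∀ β' < (Order.succ (Order.succ κ)).ord, ∀ β < β',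
        ∀ᶠ x in (W : Filter (PkL κ (Order.succ κ).ord)), g β x < g β' x := by
  obtain ⟨e, he⟩ := exists_forall_injOn_mapsTo_Iio
  have he' (β : Ordinal) (hβ : β < (Order.succ (Order.succ κ)).ord) :
      InjOn (e β (Order.succ κ).ord) (Iio β) ∧
        MapsTo (e β (Order.succ κ).ord) (Iio β) (Iio (Order.succ κ).ord) :=
    he _ _ (card_le_card_ord_of_lt_ord_succ hβ)
  exact ⟨fun β x => orderType {ξ | ξ < β ∧ e β (Order.succ κ).ord ξ ∈ x.val},
    fun β hβ => eventually_orderType_lt hfine hnorm (he' β hβ).1,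
    fun β' hβ' β hβ => eventually_orderType_lt_orderType hfine hnorm
      (he' β (hβ.trans hβ')).1 (he' β' hβ').2 hβ⟩

end SuccessorMeasure

section Ultrapower

variable {a : Cardinal.{0}} {W : Ultrafilter (PkL a (Order.succ a).ord)}

theorem eventually_UK {p : Ordinal → Prop} :
    (∀ᶠ ζ in (UK a W : Filter Ordinal), p ζ) ↔
      ∀ᶠ x in (W : Filter (PkL a (Order.succ a).ord)), p (ordOf a x) := by
  rw [UK, Ultrafilter.coe_map, eventually_map]

theorem kfac_coe (u : Ordinal → Ordinal) :
    kfac a W (u : Germ (UK a W : Filter Ordinal) Ordinal) =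
      ((u ∘ ordOf a : PkL a (Order.succ a).ord → Ordinal) :
        Germ (W : Filter (PkL a (Order.succ a).ord)) Ordinal) :=
  Germ.coe_compTendsto u (tendsto_ordOf a W)

theorem kfac_lt_kfac_iff {n n' : Germ (UK a W : Filter Ordinal) Ordinal} :
    kfac a W n < kfac a W n' ↔ n < n' :=
  Germ.inductionOn₂ n n' fun u v => by
    rw [kfac_coe, kfac_coe, Germ.coe_lt, Germ.coe_lt, eventually_UK]
    rfl

theorem exists_kfac_eq_of_lt (hreg : a.IsRegular) (hcomp : UFComplete a W)
    (hnorm : IsNormalM a (Order.succ a).ord W) {n : Germ (UK a W : Filter Ordinal) Ordinal}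
    {m : Germ (W : Filter (PkL a (Order.succ a).ord)) Ordinal}
    (hn : n < ((fun ζ : Ordinal => (Order.succ (Order.succ ζ.card)).ord :
      Germ (UK a W : Filter Ordinal) Ordinal)))
    (hm : m < kfac a W n) : ∃ n', kfac a W n' = m := by
  obtain ⟨u, rfl⟩ : ∃ u : Ordinal → Ordinal, (u : Germ (UK a W : Filter Ordinal) Ordinal) = n :=
    n.inductionOn fun u => ⟨u, rfl⟩
  obtain ⟨g, rfl⟩ : ∃ g : PkL a (Order.succ a).ord → Ordinal,
      (g : Germ (W : Filter (PkL a (Order.succ a).ord)) Ordinal) = m :=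
    m.inductionOn fun g => ⟨g, rfl⟩
  rw [kfac_coe, Germ.coe_lt] at hm
  rw [Germ.coe_lt, eventually_UK] at hn
  obtain ⟨F, hF⟩ := exists_comp_ordOf_eq hreg hcomp hnorm (hm.and hn)
  exact ⟨F, by rw [kfac_coe]; exact Germ.coe_eq.2 hF⟩

theorem lt_lift_ord_succ_succ (hreg : a.IsRegular) (hGCH : 2 ^ a = Order.succ a)
    (oN : Germ (UK a W : Filter Ordinal) Ordinal ≃o Ordinal.{v}) :
    oN ((fun ζ : Ordinal => (Order.succ (Order.succ ζ.card)).ord :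
      Germ (UK a W : Filter Ordinal) Ordinal)) <
        (Cardinal.lift.{v} (Order.succ (Order.succ a))).ord := by
  set f : Germ (UK a W : Filter Ordinal) Ordinal :=
    ((fun ζ : Ordinal => (Order.succ (Order.succ ζ.card)).ord :
      Germ (UK a W : Filter Ordinal) Ordinal))
  have hUK : Iio a.ord ∈ (UK a W : Filter Ordinal) :=
    eventually_UK.2 (Eventually.of_forall (ordOf_lt_ord hreg))
  have hcount := mk_Iio_coe_germ_le hUK (b := (Order.succ a).ord)
    (ord_pos.2 (pos_of_gt (Order.lt_succ a))) fun ζ hζ =>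
      ord_le_ord.2 (Order.succ_le_succ (Order.succ_le_of_lt (lt_ord.1 hζ)))
  rw [card_ord, card_ord, succ_power_self_of_two_power hreg.aleph0_le hGCH] at hcount
  have htransfer := Cardinal.lift_mk_eq'.2
    ⟨(oN.toEquiv.subtypeEquiv fun n => oN.lt_iff_lt.symm : Iio f ≃ Iio (oN f))⟩
  rw [Cardinal.mk_Iio_ordinal] at htransfer
  have hle : Cardinal.lift.{1} (Cardinal.lift.{v + 1} (oN f).card) ≤
      Cardinal.lift.{1} (Cardinal.lift.{v + 1} (Cardinal.lift.{v} (Order.succ a))) := by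
    rw [← htransfer]
    simpa only [Cardinal.lift_lift] using Cardinal.lift_le.{v + 1}.2 hcount
  rw [Cardinal.lift_le, Cardinal.lift_le] at hle
  exact lt_ord.2 (hle.trans_lt (Cardinal.lift_lt.2 (Order.lt_succ _)))

theorem lift_ord_succ_succ_le (hfine : IsFine a (Order.succ a).ord W)
    (hnorm : IsNormalM a (Order.succ a).ord W)
    (oM : Germ (W : Filter (PkL a (Order.succ a).ord)) Ordinal ≃o Ordinal.{v}) :
    (Cardinal.lift.{v} (Order.succ (Order.succ a))).ord ≤
      oM (kfac a W ((fun ζ : Ordinal => (Order.succ (Order.succ ζ.card)).ord :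
        Germ (UK a W : Filter Ordinal) Ordinal))) := by
  obtain ⟨g, hg, hmono⟩ := exists_eventually_increasing_family hfine hnorm
  rw [← lift_ord, ← Ordinal.lift_uzero (oM _)]
  refine lift_le_of_strictMonoOn (ψ := fun β => oM (g β : Germ _ Ordinal))
    (fun β _ β' hβ' h => oM.strictMono (Germ.coe_lt.2 (hmono β' hβ' β h))) fun β hβ => ?_
  rw [kfac_coe]
  exact oM.strictMono (Germ.coe_lt.2 (hg β hβ))

end Ultrapower

end FactorMap

/-- `oN` and `oM` are the Mostowski collapses of the ordinals of `N` and `M`; by Łoś, `(α⁺⁺)^N`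
is the class of `ζ ↦ ζ⁺⁺`. -/
theorem crit_of_factor_map_general
    (a : Cardinal.{0}) (hreg : a.IsRegular)
    (hGCH : ∀ c : Cardinal.{0}, Cardinal.aleph0 ≤ c → 2 ^ c = Order.succ c)
    (W : Ultrafilter (PkL a (Order.succ a).ord))
    (hcomp : UFComplete a W)
    (hfine : IsFine a (Order.succ a).ord W)
    (hnorm : IsNormalM a (Order.succ a).ord W)
    (oN : Filter.Germ (UK a W : Filter Ordinal) Ordinal ≃o Ordinal)
    (oM : Filter.Germ (W : Filter (PkL a (Order.succ a).ord)) Ordinal ≃o Ordinal) :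
    sInf {β : Ordinal | oM (kfac a W (oN.symm β)) ≠ β} =
      oN ((fun ζ : Ordinal => (Order.succ (Order.succ ζ.card)).ord :
        Filter.Germ (UK a W : Filter Ordinal) Ordinal)) := by
  set γ := oN ((fun ζ : Ordinal => (Order.succ (Order.succ ζ.card)).ord :
    Filter.Germ (UK a W : Filter Ordinal) Ordinal))
  set k : Ordinal → Ordinal := fun β => oM (kfac a W (oN.symm β))
  have hk : StrictMono k := fun β β' h =>
    oM.strictMono (FactorMap.kfac_lt_kfac_iff.2 (oN.symm.strictMono h))
  have hfix : ∀ β < γ, k β = β := FactorMap.eq_self_of_Iio_subset_range hk fun β hβ β' hβ' => by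
    obtain ⟨n, hn⟩ := FactorMap.exists_kfac_eq_of_lt hreg hcomp hnorm
      (oN.symm_apply_lt.2 hβ) (oM.symm_apply_lt.2 hβ')
    exact ⟨oN n, by simp [k, hn]⟩
  have hmove : γ < k γ :=
    (FactorMap.lt_lift_ord_succ_succ hreg (hGCH a hreg.aleph0_le) oN).trans_le
      (by simpa [k, γ] using FactorMap.lift_ord_succ_succ_le hfine hnorm oM)
  exact le_antisymm (csInf_le' hmove.ne')
    (le_csInf ⟨γ, hmove.ne'⟩ fun β hβ => not_lt.1 fun hlt => hβ (hfix β hlt))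

/-- (GCH) Let `j : V → M` be the ultrapower embedding of a normal measure `W` on
`P_α(α⁺)`, `ι : V → N` the ultrapower embedding of the projection `W↾α`, and
`k : N → M` the factor map `k([f]) = j(f)(α)`.  Identifying the ordinals of `N`
(resp. `M`) with actual ordinals via the unique order isomorphism (Mostowski
collapse) `oN` (resp. `oM`), the critical point of `k` is `(α⁺⁺)^N`, which by Łoś
is the collapse of the germ of `ζ ↦ ζ⁺⁺`. -/
theorem crit_of_factor_map
    (a : Cardinal.{0}) (hreg : a.IsRegular) (hunc : Cardinal.aleph0 < a)
    (hGCH : ∀ c : Cardinal.{0}, Cardinal.aleph0 ≤ c → 2 ^ c = Order.succ c)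
    (W : Ultrafilter (PkL a (Order.succ a).ord))
    (hcomp : UFComplete a W)
    (hfine : IsFine a (Order.succ a).ord W)
    (hnorm : IsNormalM a (Order.succ a).ord W)
    (oN : Filter.Germ (UK a W : Filter Ordinal) Ordinal ≃o Ordinal)
    (oM : Filter.Germ (W : Filter (PkL a (Order.succ a).ord)) Ordinal ≃o Ordinal) :
    sInf {β : Ordinal | oM (kfac a W (oN.symm β)) ≠ β} =
      oN ((fun ζ : Ordinal => (Order.succ (Order.succ ζ.card)).ord :
        Filter.Germ (UK a W : Filter Ordinal) Ordinal)) :=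
  crit_of_factor_map_general a hreg hGCH W hcomp hfine hnorm oN oM
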